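/- In a finite nilpotent group G, for every irreducible character χ and every g ∈ G, |χ(g)| = 1 implies χ(1) = 1 (i.e., nilpotent groups are circle-avoiding). -/

import Mathlib

def IsIrredChar {G : Type} [Group G] (χ : G → ℂ) : Prop :=
  ∃ V : FDRep ℂ G, CategoryTheory.Simple V ∧ ∀ g, V.character g = χ g

/-!
Suppose `χ(1) ≠ 1` and let `p` be a prime dividing `χ(1)`. Write `g = a b` with `a`, `b` commuting,
`a ^ p ^ e = 1` and `p ∤ o(b)`, and let `ω` be a primitive `p ^ (e + 1)`-th root of unity (the
exponent `e + 1` keeps `ω ≠ 1` when `a = 1`). Divisibility below is in the ring `𝓞` of algebraic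
integers.

On each generalized eigenspace of `ρ(a)`, which `ρ(b)` preserves, `ρ(a)` is a power of `ω` up to a
nilpotent, so `ω - 1 ∣ χ(g) - χ(b)`. By Schur's lemma the class sum of `b` acts as a scalar
`λ = |K| χ(b) / χ(1)`, which is integral because multiplication by it preserves the finitely
generated `ℤ`-span of `ρ(G)`; hence `ω - 1 ∣ p ∣ |K| χ(b)`. Since `|χ(g)| = 1`, `χ(g)` is a unit
of `𝓞` (its inverse is its conjugate), so `ω - 1 ∣ |K|`. In a nilpotent group a Sylow
`p`-subgroup centralizes the `p'`-element `b`, so `p ∤ |K|`, and `ω - 1` would be a unit of `𝓞`.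
-/

open CategoryTheory LinearMap Module Polynomial Finset MulAction

local notation "𝓞" => integralClosure ℤ ℂ

namespace Module.End

section IsAlgClosed

variable {K V : Type*} [Field K] [IsAlgClosed K] [AddCommGroup V] [Module K V]
  [FiniteDimensional K V]

theorem exists_trace_eq_sum_trace_restrict_maxGenEigenspace (A : End K V) :
    ∃ s : Finset K, (∀ μ ∈ s, A.HasEigenvalue μ) ∧ ∀ (B : End K V) (hAB : Commute A B),
      trace K V B = ∑ μ ∈ s,
        trace K (A.maxGenEigenspace μ) (B.restrict (A.mapsTo_maxGenEigenspace_of_comm hAB μ)) := by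
  have hfin : {μ | A.maxGenEigenspace μ ≠ ⊥}.Finite :=
    WellFoundedGT.finite_ne_bot_of_iSupIndep A.independent_maxGenEigenspace
  classical
  refine ⟨hfin.toFinset, fun μ hμ ↦ ?_, fun B hAB ↦ ?_⟩
  · exact HasUnifEigenvalue.lt zero_lt_one (hfin.mem_toFinset.mp hμ)
  · exact trace_eq_sum_trace_restrict' (DirectSum.isInternal_submodule_of_iSupIndep_of_iSup_eq_top
      A.independent_maxGenEigenspace A.iSup_maxGenEigenspace_eq_top) hfin _

end IsAlgClosed

section Field

variable {K V : Type*} [Field K] [AddCommGroup V] [Module K V]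

theorem trace_restrict_mul_maxGenEigenspace [FiniteDimensional K V] {A B : End K V}
    (hAB : Commute A B) (μ : K) :
    trace K (A.maxGenEigenspace μ)
        ((B * A).restrict (A.mapsTo_maxGenEigenspace_of_comm (hAB.mul_right (.refl A)) μ)) =
      μ * trace K (A.maxGenEigenspace μ) (B.restrict (A.mapsTo_maxGenEigenspace_of_comm hAB μ)) :=
  trace_comp_eq_mul_of_commute_of_isNilpotent
    (g := A.restrict (A.mapsTo_maxGenEigenspace_of_comm rfl μ)) μ (restrict_commute hAB.symm _ _)
    (A.isNilpotent_restrict_maxGenEigenspace_sub_algebraMap μ)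

theorem HasEigenvalue.pow_eq_one {A : End K V} {μ : K} (hμ : A.HasEigenvalue μ) {n : ℕ}
    (hA : A ^ n = 1) : μ ^ n = 1 := by
  obtain ⟨v, hv⟩ := hμ.exists_hasEigenvector
  have hpow := hv.pow_apply n
  rw [hA, one_apply] at hpow
  exact (smul_left_injective K hv.2 ((one_smul K v).trans hpow)).symm

end Field

variable {V : Type*} [AddCommGroup V] [Module ℂ V] [FiniteDimensional ℂ V]

theorem isIntegral_trace_of_pow_eq_one {f : End ℂ V} {n : ℕ} (hn : n ≠ 0) (hf : f ^ n = 1) :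
    IsIntegral ℤ (trace ℂ V f) := by
  obtain ⟨s, hs, htrace⟩ := f.exists_trace_eq_sum_trace_restrict_maxGenEigenspace
  rw [htrace f (.refl f)]
  refine IsIntegral.sum _ fun μ hμ ↦ ?_
  have hμn : μ ^ n = 1 := (hs μ hμ).pow_eq_one hf
  have htr : trace ℂ _ (f.restrict _) = μ * finrank ℂ (f.maxGenEigenspace μ) :=
    (trace_restrict_mul_maxGenEigenspace (Commute.one_right f) μ).trans
      (congrArg (μ * ·) (trace_one ℂ _))
  rw [htr]
  exact (IsIntegral.of_pow (Nat.pos_of_ne_zero hn) (hμn ▸ isIntegral_one)).mul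
    (isIntegral_natCast _)

theorem exists_trace_mul_sub_trace_eq {A B : End ℂ V} (hAB : Commute A B) {n m : ℕ} [NeZero n]
    (hm : m ≠ 0) (hA : A ^ n = 1) (hB : B ^ m = 1) {ω : 𝓞} (hω : IsPrimitiveRoot ω n) :
    ∃ z : 𝓞, trace ℂ V (A * B) - trace ℂ V B = ↑((ω - 1) * z) := by
  obtain ⟨s, hs, htrace⟩ := A.exists_trace_eq_sum_trace_restrict_maxGenEigenspace
  have hsum : trace ℂ V (A * B) - trace ℂ V B = ∑ μ ∈ s, (μ - 1) *
      trace ℂ (A.maxGenEigenspace μ) (B.restrict (A.mapsTo_maxGenEigenspace_of_comm hAB μ)) := by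
    rw [hAB.eq, htrace _ (hAB.mul_right (.refl A)), htrace B hAB, ← Finset.sum_sub_distrib]
    refine Finset.sum_congr rfl fun μ _ ↦ ?_
    rw [trace_restrict_mul_maxGenEigenspace hAB μ]
    ring
  have hterm : ∀ μ ∈ s, ∃ z : 𝓞, (μ - 1) *
      trace ℂ (A.maxGenEigenspace μ) (B.restrict (A.mapsTo_maxGenEigenspace_of_comm hAB μ)) =
        ↑((ω - 1) * z) := by
    intro μ hμ
    have ht := isIntegral_trace_of_pow_eq_one hm
      (f := B.restrict (A.mapsTo_maxGenEigenspace_of_comm hAB μ)) (by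
        rw [pow_restrict m (A.mapsTo_maxGenEigenspace_of_comm hAB μ)]
        ext
        simp [hB])
    obtain ⟨i, -, rfl⟩ := (hω.map_of_injective (f := (integralClosure ℤ ℂ).val)
      Subtype.val_injective).eq_pow_of_pow_eq_one ((hs μ hμ).pow_eq_one hA)
    obtain ⟨c, hc⟩ := sub_dvd_pow_sub_pow ω 1 i
    refine ⟨c * ⟨_, ht⟩, ?_⟩
    rw [one_pow] at hc
    rw [← mul_assoc, ← hc]
    simp
  choose! z hz using hterm
  exact ⟨∑ μ ∈ s, z μ, by rw [hsum, Finset.mul_sum]; push_cast; exact Finset.sum_congr rfl hz⟩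

end Module.End

namespace IsPrimitiveRoot

/- A monic integer polynomial killing `(ω - 1)⁻¹`, reversed and composed with `X - 1`, takes the
value `1` at `1`; yet it is divisible by the cyclotomic polynomial, whose value at `1` is `p`. -/
theorem not_isIntegral_inv_sub_one {K : Type*} [Field K] [CharZero K] {p k : ℕ}
    [hp : Fact p.Prime] {ω : K} (hω : IsPrimitiveRoot ω (p ^ (k + 1))) :
    ¬ IsIntegral ℤ (ω - 1)⁻¹ := by
  rintro ⟨f, hmonic, hf⟩
  have hpos : 0 < p ^ (k + 1) := pow_pos hp.out.pos _
  have hne : ω - 1 ≠ 0 :=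
    sub_ne_zero.mpr (hω.ne_one (Nat.one_lt_pow k.succ_ne_zero hp.out.one_lt))
  let _ : Invertible (ω - 1)⁻¹ := invertibleOfNonzero (inv_ne_zero hne)
  have hrev : aeval (ω - 1) f.reverse = 0 := by
    simpa [aeval_def, invOf_eq_inv] using
      (eval₂_reverse_eq_zero_iff (algebraMap ℤ K) (ω - 1)⁻¹ f).mpr hf
  have hdvd : cyclotomic (p ^ (k + 1)) ℤ ∣ f.reverse.comp (X - 1) := by
    rw [cyclotomic_eq_minpoly hω hpos]
    exact minpoly.isIntegrallyClosed_dvd (hω.isIntegral hpos) (by simp [aeval_comp, hrev])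
  have hp1 := eval_dvd (x := 1) hdvd
  rw [eval_one_cyclotomic_prime_pow, eval_comp, eval_sub, eval_X, eval_one, sub_self,
    ← coeff_zero_eq_eval_zero, coeff_zero_reverse, hmonic.leadingCoeff] at hp1
  exact hp.out.one_lt.ne' (by exact_mod_cast Int.eq_one_of_dvd_one (by positivity) hp1)

theorem not_isUnit_sub_one {p k : ℕ} [Fact p.Prime] {ω : 𝓞}
    (hω : IsPrimitiveRoot ω (p ^ (k + 1))) : ¬ IsUnit (ω - 1) := by
  intro hu
  obtain ⟨v, hv⟩ := hu.exists_right_inv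
  have hinv : ((ω : ℂ) - 1)⁻¹ = v :=
    inv_eq_of_mul_eq_one_right (by simpa using congrArg Subtype.val hv)
  exact (hω.map_of_injective (f := (integralClosure ℤ ℂ).val) Subtype.val_injective
    ).not_isIntegral_inv_sub_one (hinv ▸ v.2)

theorem sub_one_dvd_prime {R : Type*} [CommRing R] [IsDomain R] {p k : ℕ} [hp : Fact p.Prime]
    {ω : R} (hω : IsPrimitiveRoot ω (p ^ (k + 1))) : ω - 1 ∣ (p : R) := by
  have hζ : IsPrimitiveRoot (ω ^ p ^ k) p := by
    simpa [pow_succ, hp.out.pos.ne'] using hω.pow_of_dvd (pow_ne_zero k hp.out.ne_zero)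
      (pow_dvd_pow p k.le_succ)
  have h := sub_dvd_pow_sub_pow ω 1 (p ^ k)
  rw [one_pow] at h
  exact h.trans (hζ.sub_one_dvd_natCast hp.out.one_lt)

end IsPrimitiveRoot

theorem integralClosure.isUnit_of_norm_eq_one {x : 𝓞} (hx : ‖(x : ℂ)‖ = 1) : IsUnit x :=
  IsUnit.of_mul_eq_one ⟨_, x.2.map (starRingEnd ℂ).toIntAlgHom⟩ <| Subtype.ext <| by
    simp [Complex.mul_conj, Complex.normSq_eq_norm_sq, hx]

theorem isUnit_of_dvd_sub_of_isCoprime {R : Type*} [CommRing R] {π q N x y : R} (hπq : π ∣ q)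
    (hqN : IsCoprime q N) (hxy : π ∣ x - y) (hNy : q ∣ N * y) (hx : IsUnit x) : IsUnit π := by
  have hNx : π ∣ N * x := by
    have h := dvd_add (hπq.trans hNy) (dvd_mul_of_dvd_right hxy N)
    rwa [← mul_add, add_sub_cancel] at h
  exact hqN.isUnit_of_dvd' hπq ((hx.dvd_mul_right).mp hNx)

section Group

variable {G : Type*} [Group G]

theorem IsPGroup.commute_of_coprime_orderOf {p : ℕ} [Fact p.Prime] (hG : IsPGroup p G) {x y : G}
    (h : (orderOf x).Coprime (orderOf y)) : Commute x y := by
  obtain ⟨k, hk⟩ := IsPGroup.iff_orderOf.mp hG x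
  obtain ⟨l, hl⟩ := IsPGroup.iff_orderOf.mp hG y
  rcases le_total k l with hkl | hlk
  · rw [orderOf_eq_one_iff.mp (h.eq_one_of_dvd (hk ▸ hl ▸ pow_dvd_pow p hkl))]
    exact Commute.one_left y
  · rw [orderOf_eq_one_iff.mp (h.symm.eq_one_of_dvd (hk ▸ hl ▸ pow_dvd_pow p hlk))]
    exact Commute.one_right x

theorem Group.IsNilpotent.commute_of_coprime_orderOf [Finite G] (hG : IsNilpotent G) {x y : G}
    (h : (orderOf x).Coprime (orderOf y)) : Commute x y := by
  -- `G` is the product of its Sylow subgroups, and in each factor one component is trivial.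
  obtain ⟨e⟩ := (isNilpotent_of_finite_tfae.out 0 4).mp hG
  suffices Commute (e.symm x) (e.symm y) by simpa using this.map e
  refine funext fun q ↦ funext fun P ↦ ?_
  have : Fact (q : ℕ).Prime := ⟨Nat.prime_of_mem_primeFactors q.2⟩
  have hdvd {z : G} : orderOf (e.symm z q P) ∣ orderOf z :=
    orderOf_dvd_of_pow_eq_one (by
      rw [← Pi.pow_apply, ← Pi.pow_apply, ← map_pow, pow_orderOf_eq_one, map_one]; rfl)
  exact P.isPGroup'.commute_of_coprime_orderOf ((h.coprime_dvd_left hdvd).coprime_dvd_right hdvd)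

theorem IsOfFinOrder.exists_commute_mul_eq_of_prime {g : G} (hg : IsOfFinOrder g) {p : ℕ}
    (hp : p.Prime) : ∃ (a b : G) (e : ℕ), Commute a b ∧ a * b = g ∧ a ^ p ^ e = 1 ∧
      ¬ p ∣ orderOf b := by
  have hg0 : orderOf g ≠ 0 := hg.orderOf_pos.ne'
  obtain ⟨e, m, hm, hpm⟩ : ∃ e m, p ^ e * m = orderOf g ∧ ¬ p ∣ m :=
    ⟨_, _, Nat.ordProj_mul_ordCompl_eq_self _ p, Nat.not_dvd_ordCompl hp hg0⟩
  obtain ⟨u, v, huv⟩ := ((hp.coprime_iff_not_dvd.mpr hpm).pow_left e).cast (R := ℤ)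
  have hpow {k : ℤ} (hk : (orderOf g : ℤ) ∣ k) : g ^ k = 1 := orderOf_dvd_iff_zpow_eq_one.mp hk
  refine ⟨g ^ (v * m), g ^ (u * p ^ e), e, Commute.zpow_zpow_self g _ _, ?_, ?_, fun hpb ↦ ?_⟩
  · rw [← zpow_add, show v * m + u * p ^ e = 1 by push_cast at huv; linear_combination huv,
      zpow_one]
  · rw [← zpow_natCast, ← zpow_mul]
    exact hpow ⟨v, by rw [← hm]; push_cast; ring⟩
  · refine hpm (hpb.trans (orderOf_dvd_of_pow_eq_one ?_))
    rw [← zpow_natCast, ← zpow_mul]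
    exact hpow ⟨u, by rw [← hm]; push_cast; ring⟩

theorem Group.IsNilpotent.not_dvd_card_isConj [Fintype G] [DecidableEq G] (hG : IsNilpotent G)
    {p : ℕ} [hp : Fact p.Prime] {b : G} (hb : ¬ p ∣ orderOf b) : ¬ p ∣ #{x | IsConj x b} := by
  have hcard : #{x | IsConj x b} = (stabilizer (ConjAct G) b).index := by
    rw [index_stabilizer, ← Set.ncard_coe_finset]
    congr
    ext
    simp
  obtain ⟨P⟩ : Nonempty (Sylow p (ConjAct G)) := inferInstance
  have hle : (P : Subgroup (ConjAct G)) ≤ stabilizer (ConjAct G) b := fun c hc ↦ by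
    have hcop : (orderOf (ConjAct.ofConjAct c)).Coprime (orderOf b) := by
      simpa using P.isPGroup'.orderOf_coprime ((hp.out.coprime_iff_not_dvd).mpr hb) ⟨c, hc⟩
    rw [mem_stabilizer_iff, ConjAct.smul_def, mul_inv_eq_iff_eq_mul]
    exact hG.commute_of_coprime_orderOf hcop
  rw [hcard]
  exact fun h ↦ P.not_dvd_index (h.trans (Subgroup.index_dvd_of_le hle))

end Group

namespace FDRep

variable {G : Type*} [Group G] (V : FDRep ℂ G)

theorem nontrivial_of_simple [Simple V] : Nontrivial V := by
  by_contra h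
  rw [not_nontrivial_iff_subsingleton] at h
  exact id_nonzero V (Action.hom_ext _ _ (by ext x; exact Subsingleton.elim _ _))

theorem exists_eq_smul_one_of_commute [Simple V] (f : Module.End ℂ V)
    (hf : ∀ g, Commute (V.ρ g) f) : ∃ c : ℂ, f = c • 1 := by
  let φ : V ⟶ V :=
    ⟨FGModuleCat.ofHom f, fun g ↦ by ext x; exact LinearMap.congr_fun (hf g).symm x⟩
  obtain ⟨c, hc⟩ := endomorphism_simple_eq_smul_id ℂ φ
  exact ⟨c, (congrArg (fun ψ : V ⟶ V ↦ ψ.hom.hom.hom) hc).symm⟩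

theorem isIntegral_character [Finite G] (g : G) : IsIntegral ℤ (V.character g) :=
  Module.End.isIntegral_trace_of_pow_eq_one (orderOf_pos g).ne' <| by
    rw [← map_pow, pow_orderOf_eq_one, map_one]

noncomputable def integralCharacter [Finite G] (g : G) : 𝓞 :=
  ⟨V.character g, V.isIntegral_character g⟩

theorem sub_one_dvd_integralCharacter_mul_sub [Finite G] {a b : G} (hab : Commute a b) {n : ℕ}
    [NeZero n] (ha : a ^ n = 1) {ω : 𝓞} (hω : IsPrimitiveRoot ω n) :
    ω - 1 ∣ V.integralCharacter (a * b) - V.integralCharacter b := by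
  obtain ⟨z, hz⟩ := Module.End.exists_trace_mul_sub_trace_eq (hab.map V.ρ) (orderOf_pos b).ne'
    (by rw [← map_pow, ha, map_one]) (by rw [← map_pow, pow_orderOf_eq_one, map_one]) hω
  exact ⟨z, Subtype.ext (by simpa [integralCharacter, character] using hz)⟩

section ClassSum

variable [Fintype G] [DecidableEq G]

noncomputable def classSum (b : G) : Module.End ℂ V :=
  ∑ x with IsConj x b, V.ρ x

theorem commute_ρ_classSum (u b : G) : Commute (V.ρ u) (V.classSum b) := by
  have hconj (x : G) : IsConj x (u * x * u⁻¹) := isConj_iff.mpr ⟨u, rfl⟩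
  simp only [Commute, SemiconjBy, classSum, Finset.mul_sum, Finset.sum_mul, ← map_mul]
  refine Finset.sum_equiv (MulAut.conj u).toEquiv (fun x ↦ ?_) (fun x _ ↦ ?_)
  · simp only [mem_filter, mem_univ, true_and, MulEquiv.toEquiv_eq_coe, MulEquiv.coe_toEquiv,
      MulAut.conj_apply]
    exact ⟨(hconj x).symm.trans, (hconj x).trans⟩
  · simp [mul_assoc]

theorem trace_classSum (b : G) :
    trace ℂ V (V.classSum b) = #{x | IsConj x b} * V.character b := by
  rw [classSum, map_sum, ← nsmul_eq_mul, ← Finset.sum_const]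
  refine Finset.sum_congr rfl fun x hx ↦ ?_
  obtain ⟨u, rfl⟩ := isConj_iff.mp (Finset.mem_filter.mp hx).2.symm
  exact V.char_conj b u

theorem classSum_mul_mem_span_range_ρ (b : G) {w : Module.End ℂ V}
    (hw : w ∈ Submodule.span ℤ (Set.range V.ρ)) :
    V.classSum b * w ∈ Submodule.span ℤ (Set.range V.ρ) := by
  induction hw using Submodule.span_induction with
  | mem w hw =>
    obtain ⟨x, rfl⟩ := hw
    rw [classSum, Finset.sum_mul]
    exact Submodule.sum_mem _ fun y _ ↦ map_mul V.ρ y x ▸ Submodule.subset_span ⟨y * x, rfl⟩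
  | zero => simp
  | add w w' _ _ h h' => rw [mul_add]; exact Submodule.add_mem _ h h'
  | smul n w _ h => rw [mul_smul_comm]; exact Submodule.smul_mem _ n h

theorem exists_isIntegral_classSum_eq_smul_one [Simple V] (b : G) :
    ∃ c : ℂ, IsIntegral ℤ c ∧ V.classSum b = c • 1 := by
  obtain ⟨c, hc⟩ := V.exists_eq_smul_one_of_commute _ (V.commute_ρ_classSum · b)
  have := V.nontrivial_of_simple
  refine ⟨c, isIntegral_of_smul_mem_submodule (Submodule.span ℤ (Set.range V.ρ)) ?_
    (Submodule.fg_span (Set.finite_range _)) c fun w hw ↦ ?_, hc⟩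
  · rw [Submodule.ne_bot_iff]
    exact ⟨1, Submodule.subset_span ⟨1, map_one V.ρ⟩, one_ne_zero⟩
  · simpa [hc] using V.classSum_mul_mem_span_range_ρ b hw

theorem finrank_dvd_card_mul_integralCharacter [Simple V] (b : G) :
    (finrank ℂ V : 𝓞) ∣ #{x | IsConj x b} * V.integralCharacter b := by
  obtain ⟨c, hc, hcb⟩ := V.exists_isIntegral_classSum_eq_smul_one b
  have htrace := congrArg (trace ℂ V) hcb
  rw [trace_classSum, map_smul, trace_one, smul_eq_mul] at htrace
  exact ⟨⟨c, hc⟩, Subtype.ext <| by push_cast; rw [mul_comm _ c]; exact htrace⟩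

end ClassSum

end FDRep

/-- Finite nilpotent groups are circle-avoiding: if an irreducible character value has
absolute value `1`, the character is linear. -/
theorem nilpotent_circle_avoiding
    (G : Type) [Group G] [Fintype G] (hnil : Group.IsNilpotent G)
    (χ : G → ℂ) (hχ : IsIrredChar χ) (g : G) (habs : ‖χ g‖ = 1) :
    χ 1 = 1 := by
  classical
  obtain ⟨V, hV, hVχ⟩ := hχ
  obtain rfl : V.character = χ := funext hVχ
  rw [FDRep.char_one, Nat.cast_eq_one]
  by_contra hd
  obtain ⟨p, hp, hpd⟩ := Nat.exists_prime_and_dvd hd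
  have : Fact p.Prime := ⟨hp⟩
  obtain ⟨a, b, e, hab, rfl, ha, hb⟩ :=
    (isOfFinOrder_of_finite g).exists_commute_mul_eq_of_prime hp
  have : NeZero (p ^ (e + 1)) := ⟨pow_ne_zero _ hp.ne_zero⟩
  have hζ := Complex.isPrimitiveRoot_exp (p ^ (e + 1)) (NeZero.ne _)
  obtain ⟨ω, hω⟩ : ∃ ω : 𝓞, IsPrimitiveRoot ω (p ^ (e + 1)) :=
    ⟨⟨_, hζ.isIntegral (NeZero.pos _)⟩,
      .of_map_of_injective (f := (integralClosure ℤ ℂ).val) hζ Subtype.val_injective⟩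
  refine hω.not_isUnit_sub_one (isUnit_of_dvd_sub_of_isCoprime hω.sub_one_dvd_prime
    (hp.coprime_iff_not_dvd.mpr (hnil.not_dvd_card_isConj hb)).cast
    (V.sub_one_dvd_integralCharacter_mul_sub hab (by rw [pow_succ, pow_mul, ha, one_pow]) hω)
    ((Nat.cast_dvd_cast hpd).trans (V.finrank_dvd_card_mul_integralCharacter b))
    (integralClosure.isUnit_of_norm_eq_one habs))
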